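/- For every x = (x₁,x₂) in the upper half plane H, the one-form β_H(x) = w(x)/(x₂(4+|x|²)) with w(x) = (2x₁x₂, x₂²-x₁²-4) satisfies |β_H(x)|_{g_h} = |w(x)|/(4+|x|²) < 1, where g_h is the hyperbolic metric (g_h)_x = (1/x₂²)·(Euclidean metric); hence (H, F_H) is a Randers space. -/

import Mathlib

noncomputable section

/-- The Euclidean plane. -/
abbrev E2 := EuclideanSpace ℝ (Fin 2)

/-- The open unit disk. -/
def Dset : Set E2 := {x | ‖x‖ < 1}

/-- The upper half plane. -/
def Hset : Set E2 := {x | x 1 > 0}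

/-- w(x) = (2x₁x₂, x₂²-x₁²-4). -/
def wH (x : E2) : E2 := WithLp.toLp 2 (![2 * x 0 * x 1, x 1 ^ 2 - x 0 ^ 2 - 4])

/-- The one-form of the Finsler-Poincaré upper half plane metric. -/
def betaH (x : E2) : E2 := (1 / (x 1 * (4 + ‖x‖ ^ 2))) • wH x

/-! The identity `‖w(x)‖² = (4 + ‖x‖²)² - 16 x₂²` shows `‖w(x)‖ < 4 + ‖x‖²` off the axis `x₂ = 0`;
the factor `x₂` of the hyperbolic dual norm cancels the `1 / x₂` in `β_H`. -/

lemma norm_sq_E2 (y : E2) : ‖y‖ ^ 2 = y 0 ^ 2 + y 1 ^ 2 := by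
  simp [EuclideanSpace.real_norm_sq_eq, Fin.sum_univ_two]

lemma norm_wH_sq (x : E2) : ‖wH x‖ ^ 2 = (4 + ‖x‖ ^ 2) ^ 2 - 16 * x 1 ^ 2 := by
  simp only [norm_sq_E2, wH, Matrix.cons_val_zero, Matrix.cons_val_one]
  ring

lemma norm_wH_lt {x : E2} (hx : x 1 ≠ 0) : ‖wH x‖ < 4 + ‖x‖ ^ 2 := by
  refine lt_of_pow_lt_pow_left₀ 2 (by positivity) ?_
  rw [norm_wH_sq]
  have : 0 < x 1 ^ 2 := by positivity
  linarith

lemma mul_norm_betaH {x : E2} (hx : 0 < x 1) :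
    x 1 * ‖betaH x‖ = ‖wH x‖ / (4 + ‖x‖ ^ 2) := by
  rw [betaH, norm_smul, Real.norm_of_nonneg (by positivity)]
  field_simp

theorem betaH_hyperbolic_norm_lt_one (x : E2) (hx : x ∈ Hset) :
    x 1 * ‖betaH x‖ = ‖wH x‖ / (4 + ‖x‖ ^ 2) ∧ ‖wH x‖ / (4 + ‖x‖ ^ 2) < 1 :=
  ⟨mul_norm_betaH hx, (div_lt_one (by positivity)).2 (norm_wH_lt (ne_of_gt hx))⟩
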